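/- Let L be a sequence of vertex flips on K_n with s(L) < n and not revisiting any state. Partition L into maximal blocks of singletons (vertices appearing exactly once in L) and maximal transition blocks T₁,...,T_k (of repeated vertices). Then rank(A_L) ≥ s₁(L) + ∑_i s(T_i) = s(L) + ∑_v (b(v) - 1)⁺, where b(v) is the number of transition blocks containing v and s₁(L) the number of singletons. -/

import Mathlib

open Matrix

/-- Flip the spin of vertex `v`. -/
def flipSpin {n : ℕ} (v : Fin n) (σ : Fin n → ℝ) : Fin n → ℝ :=
  fun u => if u = v then -σ u else σ u

/-- The spin configuration obtained from `σ₀` by flipping the vertices of `L` in order. -/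
def evolve {n : ℕ} (σ₀ : Fin n → ℝ) : List (Fin n) → (Fin n → ℝ)
  | [] => σ₀
  | v :: L => evolve (flipSpin v σ₀) L

/-- A spin configuration takes values in `{-1, 1}`. -/
def isSpin {n : ℕ} (σ : Fin n → ℝ) : Prop := ∀ v, σ v = 1 ∨ σ v = -1

/-- The move matrix of a flip sequence `L` from initial configuration `σ₀` on the complete
graph: the `t`-th column is the vector `α_t` of coefficients of the change of the
Hamiltonian at step `t`, i.e. `(α_t)_{u v_t} = σ_{t-1}(v_t) σ_{t-1}(u)` for `u ≠ v_t` and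
`(α_t)_e = 0` for edges `e` not incident to `v_t`.  (Rows are indexed by ordered pairs;
each edge appears as two equal rows, which does not affect the rank.) -/
def moveMatrix {n : ℕ} (σ₀ : Fin n → ℝ) (L : List (Fin n)) :
    Matrix (Fin n × Fin n) (Fin L.length) ℝ :=
  fun e t =>
    if e.1 = L.get t ∧ e.2 ≠ L.get t then
      evolve σ₀ (L.take t.1) (L.get t) * evolve σ₀ (L.take t.1) e.2
    else if e.2 = L.get t ∧ e.1 ≠ L.get t then
      evolve σ₀ (L.take t.1) (L.get t) * evolve σ₀ (L.take t.1) e.1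
    else 0

/-- `s(L)`: the number of distinct vertices appearing in `L`. -/
def sDist {n : ℕ} (L : List (Fin n)) : ℕ := L.toFinset.card

/-- `s₂(L)`: the number of repeated vertices (appearing at least twice) in `L`. -/
def sRep {n : ℕ} (L : List (Fin n)) : ℕ :=
  (L.toFinset.filter fun v => 2 ≤ L.count v).card

/-- `s₁(L)`: the number of singletons (vertices appearing exactly once) in `L`. -/
def sSing {n : ℕ} (L : List (Fin n)) : ℕ :=
  (L.toFinset.filter fun v => L.count v = 1).card

/-- The block `L[i+1, j]` (0-indexed: positions `i, …, j-1`). -/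
def seg {n : ℕ} (L : List (Fin n)) (i j : ℕ) : List (Fin n) := (L.take j).drop i

/-- `L` does not revisit any state: no (nonempty) contiguous block of `L` contains every
vertex an even number of times. -/
def noRevisit {n : ℕ} (L : List (Fin n)) : Prop :=
  ∀ i j : ℕ, i < j → j ≤ L.length → ∃ v, ¬ Even ((seg L i j).count v)

/-- A vertex is a repeated vertex of `L` if it appears at least twice. -/
def isRepV {n : ℕ} (L : List (Fin n)) (v : Fin n) : Prop := 2 ≤ L.count v

/-- `TransBlock L i j`: the block of positions `i, …, j-1` is a transition block of `L`,
i.e. a maximal contiguous segment consisting only of repeated vertices. -/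
def TransBlock {n : ℕ} (L : List (Fin n)) (i j : ℕ) : Prop :=
  i < j ∧ j ≤ L.length ∧ (∀ v ∈ seg L i j, isRepV L v) ∧
    (i = 0 ∨ ¬ ∀ v ∈ seg L (i - 1) j, isRepV L v) ∧
    (j = L.length ∨ ¬ ∀ v ∈ seg L i (j + 1), isRepV L v)


/-!
Fix a vertex `w` that is never flipped (it exists because `s(L) < n`) and a vector `c` in the
kernel of `A_L`; write `σ_t` for the configuration before step `t`. Row `(v, w)` of `A_L c = 0`
says that `∑ c_t σ_t(v)` over the flips `t` of `v` vanishes; for a singleton this sum has one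
term, so `c` vanishes at every singleton flip. If `q` is a singleton flipped at step `p`, then
`σ_t(q)` changes sign exactly after `p`, so row `(v, q)` shows that the same sum restricted to the
steps after `p` vanishes as well. A transition block starts at `0` or right after a singleton and
ends at the end of `L` or right before one, hence the sum vanishes over each transition block.
So the columns of the singleton flips, together with one flip of each vertex in each transition
block, are linearly independent. The identity is double counting of the pairs `(T_i, v)` with
`v ∈ T_i`: a singleton lies in no transition block and a repeated vertex in at least one.
-/

open Finset Matrix

theorem Matrix.card_le_rank_of_mulVec_eq_zero {K m n ι : Type*} [Field K] [Fintype m]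
    [Fintype n] [Fintype ι] (A : Matrix m n K) {f : ι → n} (hf : Function.Injective f)
    (h : ∀ c : n → K, (∀ t ∉ Set.range f, c t = 0) → A *ᵥ c = 0 → ∀ k, c (f k) = 0) :
    Fintype.card ι ≤ A.rank := by
  classical
  have hli : LinearIndependent K (A.submatrix id f).col := by
    rw [Fintype.linearIndependent_iff]
    intro g hg k
    set c : n → K := Function.extend f g 0
    have hc0 : ∀ t ∉ Set.range f, c t = 0 := fun t ht =>
      Function.extend_apply' _ _ _ (by simpa using ht)
    have hcA : A *ᵥ c = 0 := by
      ext e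
      calc (A *ᵥ c) e = ∑ t ∈ univ.image f, A e t * c t :=
            (sum_subset (subset_univ _) fun t _ ht => by
              rw [hc0 t (by simpa using ht), mul_zero]).symm
        _ = ∑ k, g k * A e (f k) := by
            rw [sum_image fun _ _ _ _ h => hf h]
            simp [c, hf.extend_apply, mul_comm]
        _ = 0 := by simpa using congrFun hg e
    simpa [c, hf.extend_apply] using h c hc0 hcA k
  calc Fintype.card ι = (A.submatrix id f).rank := by
        rw [← rank_transpose, (show LinearIndependent K (A.submatrix id f)ᵀ.row by
          simpa [Matrix.row, Matrix.col] using hli).rank_matrix]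
    _ ≤ A.rank := rank_submatrix_le _ _ _

lemma Finset.card_filter_add_sum_eq {α : Type*} (s : Finset α) (P : α → Prop) [DecidablePred P]
    (b : α → ℕ) (h0 : ∀ a ∈ s, P a → b a = 0) (h1 : ∀ a ∈ s, ¬ P a → 1 ≤ b a) :
    #(s.filter P) + ∑ a ∈ s, b a = #s + ∑ a ∈ s, (b a - 1) := by
  have hsum : ∑ a ∈ s, b a = ∑ a ∈ s, (b a - 1) + #(s.filter fun a => ¬ P a) := by
    rw [card_filter, ← sum_add_distrib]
    refine sum_congr rfl fun a ha => ?_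
    by_cases hP : P a
    · simp [hP, h0 a ha hP]
    · simp only [hP, not_false_eq_true, if_true]
      have := h1 a ha hP
      omega
  rw [hsum, ← card_filter_add_card_filter_not P (s := s)]
  ring

namespace List

variable {α : Type*} [DecidableEq α] {L : List α}

lemma two_le_count_of_getElem_eq {s t : Fin L.length} (hst : s < t) (h : L[s] = L[t]) :
    2 ≤ L.count L[s] := by
  rw [← duplicate_iff_two_le_count, duplicate_iff_sublist]
  have hsub := map_getElem_sublist (l := L) (is := [s, t]) (by simpa using hst)
  simp only [map_cons, map_nil, Fin.getElem_fin] at hsub h ⊢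
  rwa [← h] at hsub

lemma eq_of_count_eq_one {p t : Fin L.length} (hp : L.count L[p] = 1) (h : L[t] = L[p]) :
    t = p := by
  rcases lt_trichotomy t p with hlt | rfl | hlt
  · have := two_le_count_of_getElem_eq hlt h
    rw [h] at this
    omega
  · rfl
  · have := two_le_count_of_getElem_eq hlt h.symm
    omega

lemma count_take_of_count_eq_one {p : Fin L.length} (hp : L.count L[p] = 1) (t : ℕ) :
    (L.take t).count L[p] = if (p : ℕ) < t then 1 else 0 := by
  split_ifs with hpt
  · have hmem : L[p] ∈ L.take t := mem_take_iff_getElem.2 ⟨p, by omega, rfl⟩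
    have := (take_sublist t L).count_le L[p]
    have := count_pos_iff.2 hmem
    omega
  · refine count_eq_zero.2 fun hmem => ?_
    obtain ⟨s, hs, hsp⟩ := mem_take_iff_getElem.1 hmem
    have : s = p :=
      congrArg Fin.val (eq_of_count_eq_one hp (t := ⟨s, by omega⟩) (by simpa using hsp))
    omega

end List

section Spins

variable {n : ℕ} {σ₀ : Fin n → ℝ}

lemma evolve_apply (M : List (Fin n)) (u : Fin n) :
    evolve σ₀ M u = (-1) ^ M.count u * σ₀ u := by
  induction M generalizing σ₀ with
  | nil => simp [evolve]
  | cons v M ih =>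
    rw [evolve, ih, List.count_cons]
    by_cases h : u = v
    · simp [flipSpin, h, pow_succ]
    · simp [flipSpin, h, Ne.symm h]

lemma evolve_ne_zero (hσ : isSpin σ₀) (M : List (Fin n)) (u : Fin n) : evolve σ₀ M u ≠ 0 := by
  rw [evolve_apply]
  rcases hσ u with h | h <;> simp [h]

lemma evolve_take_of_notMem {L : List (Fin n)} {w : Fin n} (hw : w ∉ L) (t : ℕ) :
    evolve σ₀ (L.take t) w = σ₀ w := by
  rw [evolve_apply, List.count_eq_zero.2 fun h => hw (List.mem_of_mem_take h)]
  simp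

lemma evolve_take_of_count_eq_one {L : List (Fin n)} {p : Fin L.length}
    (hp : L.count L[p] = 1) (t : ℕ) :
    evolve σ₀ (L.take t) L[p] = if (p : ℕ) < t then -σ₀ L[p] else σ₀ L[p] := by
  rw [evolve_apply, List.count_take_of_count_eq_one hp]
  split_ifs <;> simp

end Spins

section Blocks

variable {n : ℕ} {L : List (Fin n)} {i j : ℕ}

lemma mem_seg_iff {v : Fin n} :
    v ∈ seg L i j ↔ ∃ t : Fin L.length, i ≤ t ∧ (t : ℕ) < j ∧ L[t] = v := by
  simp only [seg, List.mem_iff_getElem, List.getElem_drop, List.getElem_take, List.length_drop,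
    List.length_take]
  constructor
  · rintro ⟨k, hk, rfl⟩
    exact ⟨⟨i + k, by omega⟩, by simp, by simp; omega, rfl⟩
  · rintro ⟨t, hit, htj, rfl⟩
    exact ⟨t - i, by omega, by simp [Nat.add_sub_cancel' hit]⟩

lemma forall_mem_seg_iff {P : Fin n → Prop} :
    (∀ v ∈ seg L i j, P v) ↔ ∀ t : Fin L.length, i ≤ t → (t : ℕ) < j → P L[t] := by
  simp only [mem_seg_iff]
  grind

namespace TransBlock

lemma two_le_count (hB : TransBlock L i j) {t : Fin L.length} (hit : i ≤ t) (htj : t < j) :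
    2 ≤ L.count L[t] :=
  forall_mem_seg_iff.1 hB.2.2.1 t hit htj

lemma count_eq_one_of_succ_eq (hB : TransBlock L i j) {p : Fin L.length} (hp : (p : ℕ) + 1 = i) :
    L.count L[p] = 1 := by
  have hpos : 0 < L.count L[p] := List.count_pos_iff.2 (List.getElem_mem _)
  refine le_antisymm (not_lt.1 fun hrep => ?_) hpos
  refine hB.2.2.2.1.elim (by omega) fun hmax => hmax (forall_mem_seg_iff.2 fun t hit htj => ?_)
  rcases eq_or_lt_of_le hit with h | h
  · obtain rfl : t = p := Fin.ext (by omega)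
    exact hrep
  · exact hB.two_le_count (by omega) htj

lemma count_eq_one_of_eq (hB : TransBlock L i j) {p : Fin L.length} (hp : (p : ℕ) = j) :
    L.count L[p] = 1 := by
  have hpos : 0 < L.count L[p] := List.count_pos_iff.2 (List.getElem_mem _)
  refine le_antisymm (not_lt.1 fun hrep => ?_) hpos
  refine hB.2.2.2.2.elim (by omega) fun hmax => hmax (forall_mem_seg_iff.2 fun t hit htj => ?_)
  rcases eq_or_lt_of_le (Nat.lt_succ_iff.1 htj) with h | h
  · obtain rfl : t = p := Fin.ext (by omega)
    exact hrep
  · exact hB.two_le_count hit h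

lemma le_and_le_of_mem {i' j' : ℕ} (hB : TransBlock L i j) (hB' : TransBlock L i' j')
    {t : Fin L.length}
    (hit : i ≤ t) (htj : t < j) (hit' : i' ≤ t) (htj' : t < j') : i ≤ i' ∧ j' ≤ j := by
  have := hB'.2.1
  constructor
  · by_contra! h
    have hsing := hB.count_eq_one_of_succ_eq (p := ⟨i - 1, by omega⟩) (by simp; omega)
    have := hB'.two_le_count (t := ⟨i - 1, by omega⟩) (by simp; omega) (by simp; omega)
    omega
  · by_contra! h
    have hsing := hB.count_eq_one_of_eq (p := ⟨j, by omega⟩) rfl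
    have := hB'.two_le_count (t := ⟨j, by omega⟩) (by simp; omega) (by simp; omega)
    omega

lemma eq_of_mem {i' j' : ℕ} (hB : TransBlock L i j) (hB' : TransBlock L i' j')
    {t : Fin L.length}
    (hit : i ≤ t) (htj : t < j) (hit' : i' ≤ t) (htj' : t < j') : (i, j) = (i', j') := by
  obtain ⟨h1, h2⟩ := hB.le_and_le_of_mem hB' hit htj hit' htj'
  obtain ⟨h3, h4⟩ := hB'.le_and_le_of_mem hB hit' htj' hit htj
  simp only [Prod.mk.injEq]
  omega

end TransBlock

open Classical in
lemma exists_transBlock_of_two_le_count {v : Fin n} (hv : 2 ≤ L.count v) :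
    ∃ i j, TransBlock L i j ∧ v ∈ seg L i j := by
  obtain ⟨t, htv⟩ : ∃ t : Fin L.length, L[t] = v :=
    List.mem_iff_get.1 (List.count_pos_iff.1 (by omega))
  have ht : 2 ≤ L.count L[t] := htv ▸ hv
  have hPt : ∀ v ∈ seg L t (t + 1), isRepV L v :=
    forall_mem_seg_iff.2 fun s hs hst => by obtain rfl : s = t := Fin.ext (by omega); exact ht
  have hP : ∃ k, ∀ v ∈ seg L k (t + 1), isRepV L v := ⟨t, hPt⟩
  set i := Nat.find hP
  have hQ : ∃ k, (t : ℕ) < k ∧ (k = L.length ∨ ¬ ∀ v ∈ seg L i (k + 1), isRepV L v) :=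
    ⟨L.length, t.2, Or.inl rfl⟩
  set j := Nat.find hQ
  have hPi : ∀ v ∈ seg L i (t + 1), isRepV L v := Nat.find_spec hP
  have hit : i ≤ t := Nat.find_min' hP hPt
  obtain ⟨htj, hjmax⟩ : (t : ℕ) < j ∧ (j = L.length ∨ ¬ ∀ v ∈ seg L i (j + 1), isRepV L v) :=
    Nat.find_spec hQ
  have hjlen : j ≤ L.length := Nat.find_min' hQ ⟨t.2, Or.inl rfl⟩
  refine ⟨i, j, ⟨by omega, hjlen, ?_, ?_, hjmax⟩, mem_seg_iff.2 ⟨t, hit, htj, htv⟩⟩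
  · rcases eq_or_lt_of_le (Nat.succ_le_of_lt htj) with hj | hj
    · rwa [← hj]
    · have := Nat.find_min hQ (m := j - 1) (by omega)
      simp only [not_and, not_or, not_not, Nat.sub_add_cancel (by omega : 1 ≤ j)] at this
      exact (this (by omega)).2
  · refine (Nat.eq_zero_or_pos i).imp id fun hi hrep => Nat.find_min hP (m := i - 1) (by omega) ?_
    rw [forall_mem_seg_iff] at hrep ⊢
    exact fun s h1 h2 => hrep s h1 (by omega)

end Blocks

section Kernel

variable {n : ℕ} {σ₀ : Fin n → ℝ} {L : List (Fin n)} {c : Fin L.length → ℝ}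

def windowSum (σ₀ : Fin n → ℝ) (L : List (Fin n)) (c : Fin L.length → ℝ) (v : Fin n)
    (i j : ℕ) : ℝ :=
  ∑ t : Fin L.length with i ≤ t.1 ∧ t.1 < j ∧ L[t] = v, c t * evolve σ₀ (L.take t) v

lemma windowSum_add {v : Fin n} {i j k : ℕ} (hij : i ≤ j) (hjk : j ≤ k) :
    windowSum σ₀ L c v i j + windowSum σ₀ L c v j k = windowSum σ₀ L c v i k := by
  simp only [windowSum, sum_filter, ← sum_add_distrib]
  refine sum_congr rfl fun t _ => ?_
  split_ifs <;> grind

lemma windowSum_eq_zero_of_forall {v : Fin n} {i j : ℕ}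
    (h : ∀ t : Fin L.length, i ≤ t → (t : ℕ) < j → c t = 0) : windowSum σ₀ L c v i j = 0 :=
  sum_eq_zero fun t ht => by
    obtain ⟨h1, h2, -⟩ := (mem_filter.1 ht).2
    rw [h t h1 h2, zero_mul]

lemma mulVec_moveMatrix_apply {v u : Fin n} (hvu : v ≠ u) :
    (moveMatrix σ₀ L *ᵥ c) (v, u) =
      ∑ t with L[t] = v, c t * evolve σ₀ (L.take t) v * evolve σ₀ (L.take t) u +
      ∑ t with L[t] = u, c t * evolve σ₀ (L.take t) u * evolve σ₀ (L.take t) v := by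
  simp only [mulVec, dotProduct, moveMatrix, sum_filter, ← sum_add_distrib]
  refine sum_congr rfl fun t _ => ?_
  split_ifs <;> grind

lemma windowSum_zero_length (v : Fin n) :
    windowSum σ₀ L c v 0 L.length = ∑ t with L[t] = v, c t * evolve σ₀ (L.take t) v := by
  simp [windowSum]

lemma windowSum_zero_length_eq_zero_of_notMem (hc : moveMatrix σ₀ L *ᵥ c = 0) {w : Fin n}
    (hw : w ∉ L) (hσw : σ₀ w ≠ 0) (v : Fin n) : windowSum σ₀ L c v 0 L.length = 0 := by
  have hnot : ∀ t : Fin L.length, L[t] ≠ w := fun t ht => hw (ht ▸ List.getElem_mem _)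
  by_cases hvw : v = w
  · exact sum_eq_zero fun t ht => absurd (hvw ▸ (mem_filter.1 ht).2.2.2) (hnot t)
  have hrow := congrFun hc (v, w)
  rw [mulVec_moveMatrix_apply hvw, filter_false_of_mem fun t _ => hnot t, sum_empty, add_zero,
    Pi.zero_apply] at hrow
  simp only [evolve_take_of_notMem hw, ← sum_mul] at hrow
  rw [windowSum_zero_length]
  exact (mul_eq_zero.1 hrow).resolve_right hσw

lemma apply_eq_zero_of_count_eq_one (hσ : isSpin σ₀)
    (hfull : ∀ v, windowSum σ₀ L c v 0 L.length = 0) {p : Fin L.length}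
    (hp : L.count L[p] = 1) : c p = 0 := by
  have h := hfull L[p]
  rw [windowSum_zero_length, sum_eq_single_of_mem p (by simp)
    fun t ht htp => absurd (List.eq_of_count_eq_one hp (mem_filter.1 ht).2) htp] at h
  exact (mul_eq_zero.1 h).resolve_right (evolve_ne_zero hσ _ _)

lemma windowSum_succ_length_eq_zero (hσ : isSpin σ₀) (hc : moveMatrix σ₀ L *ᵥ c = 0)
    (hfull : ∀ v, windowSum σ₀ L c v 0 L.length = 0) {p : Fin L.length} (hp : L.count L[p] = 1)
    (v : Fin n) : windowSum σ₀ L c v (p + 1) L.length = 0 := by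
  by_cases hv : v = L[p]
  · refine sum_eq_zero fun t ht => ?_
    obtain ⟨h1, -, h3⟩ := (mem_filter.1 ht).2
    obtain rfl := List.eq_of_count_eq_one hp (h3.trans hv)
    omega
  have hrow := congrFun hc (v, L[p])
  have hsecond : ∑ t with L[t] = L[p],
      c t * evolve σ₀ (L.take t) L[p] * evolve σ₀ (L.take t) v = 0 :=
    sum_eq_zero fun t ht => by
      rw [List.eq_of_count_eq_one hp (mem_filter.1 ht).2, apply_eq_zero_of_count_eq_one hσ hfull hp]
      ring
  have hfirst : ∑ t with L[t] = v, c t * evolve σ₀ (L.take t) v * evolve σ₀ (L.take t) L[p] =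
      σ₀ L[p] * (windowSum σ₀ L c v 0 (p + 1) - windowSum σ₀ L c v (p + 1) L.length) := by
    simp only [windowSum, sum_filter, mul_sum, ← sum_sub_distrib]
    refine sum_congr rfl fun t _ => ?_
    rw [evolve_take_of_count_eq_one hp]
    by_cases hvt : L[(t : ℕ)] = v
    · by_cases hpt : (p : ℕ) < t
      · simp [hvt, hpt, show ¬ (t : ℕ) < p + 1 by omega, show (p : ℕ) + 1 ≤ t by omega]
        ring
      · simp [hvt, hpt, show (t : ℕ) < p + 1 by omega, show ¬ (p : ℕ) + 1 ≤ t by omega]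
        ring
    · simp [hvt]
  rw [mulVec_moveMatrix_apply hv, hsecond, hfirst, add_zero, Pi.zero_apply] at hrow
  have hsplit := windowSum_add (σ₀ := σ₀) (c := c) (v := v) (Nat.zero_le (p + 1)) p.2
  have hσp : σ₀ L[p] ≠ 0 := evolve_ne_zero hσ [] L[p]
  have := (mul_eq_zero.1 hrow).resolve_left hσp
  linarith [hfull v]

lemma TransBlock.windowSum_eq_zero (hσ : isSpin σ₀) (hc : moveMatrix σ₀ L *ᵥ c = 0)
    (hfull : ∀ v, windowSum σ₀ L c v 0 L.length = 0) {i j : ℕ} (hB : TransBlock L i j)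
    (v : Fin n) : windowSum σ₀ L c v i j = 0 := by
  have hi : windowSum σ₀ L c v i L.length = 0 := by
    rcases Nat.eq_zero_or_pos i with rfl | hi
    · exact hfull v
    · have hp := hB.count_eq_one_of_succ_eq (p := ⟨i - 1, by have := hB.1; have := hB.2.1; omega⟩)
        (by simp; omega)
      simpa [Nat.sub_add_cancel hi] using windowSum_succ_length_eq_zero hσ hc hfull hp v
  have hj : windowSum σ₀ L c v j L.length = 0 := by
    rcases eq_or_lt_of_le hB.2.1 with hj | hj
    · exact windowSum_eq_zero_of_forall fun t h1 h2 => by omega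
    · have hp := hB.count_eq_one_of_eq (p := ⟨j, hj⟩) rfl
      rw [← windowSum_add (Nat.le_succ j) hj, windowSum_succ_length_eq_zero hσ hc hfull hp v,
        add_zero]
      refine windowSum_eq_zero_of_forall fun t h1 h2 => ?_
      obtain rfl : t = ⟨j, hj⟩ := Fin.ext (by simp; omega)
      exact apply_eq_zero_of_count_eq_one hσ hfull hp
  linarith [windowSum_add (σ₀ := σ₀) (c := c) (v := v) hB.1.le hB.2.1]

end Kernel

section Rank

variable {n : ℕ} {L : List (Fin n)} {TB : Finset (ℕ × ℕ)}

def incidences (L : List (Fin n)) (TB : Finset (ℕ × ℕ)) : Finset ((ℕ × ℕ) × Fin n) :=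
  (TB ×ˢ L.toFinset).filter fun q => q.2 ∈ seg L q.1.1 q.1.2

lemma card_incidences_eq_sum_sDist :
    #(incidences L TB) = ∑ p ∈ TB, sDist (seg L p.1 p.2) := by
  rw [incidences, card_filter, sum_product]
  refine sum_congr rfl fun p _ => ?_
  rw [sDist, ← card_filter]
  congr 1
  ext v
  simp only [mem_filter, List.mem_toFinset, and_iff_right_iff_imp]
  exact fun h => List.mem_of_mem_take (List.mem_of_mem_drop h)

lemma card_incidences_eq_sum_card :
    #(incidences L TB) = ∑ v ∈ L.toFinset, #(TB.filter fun p => v ∈ seg L p.1 p.2) := by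
  rw [incidences, card_filter, sum_product_right]
  simp_rw [← card_filter]

lemma transBlock_of_mem_incidences (hTB : ∀ p, p ∈ TB ↔ TransBlock L p.1 p.2)
    {q : (ℕ × ℕ) × Fin n} (hq : q ∈ incidences L TB) :
    TransBlock L q.1.1 q.1.2 ∧ q.2 ∈ seg L q.1.1 q.1.2 := by
  simp only [incidences, mem_filter, mem_product] at hq
  exact ⟨(hTB _).1 hq.1.1, hq.2⟩

lemma exists_representative_flips (hTB : ∀ p, p ∈ TB ↔ TransBlock L p.1 p.2) :
    ∃ f : {v // v ∈ L.toFinset.filter (L.count · = 1)} ⊕ {q // q ∈ incidences L TB} →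
        Fin L.length,
      (∀ y, L[f (.inl y)] = y.1) ∧
      (∀ q, q.1.1.1 ≤ (f (.inr q) : ℕ) ∧ (f (.inr q) : ℕ) < q.1.1.2 ∧ L[f (.inr q)] = q.1.2) ∧
      ∀ q k, q.1.1.1 ≤ (f k : ℕ) → (f k : ℕ) < q.1.1.2 → L[f k] = q.1.2 → k = .inr q := by
  choose posS hposS using fun y : {v // v ∈ L.toFinset.filter (L.count · = 1)} =>
    List.mem_iff_get.1 (List.mem_toFinset.1 (mem_filter.1 y.2).1)
  have hmem := fun q (hq : q ∈ incidences L TB) => transBlock_of_mem_incidences hTB hq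
  choose posB hposB using fun q : {q // q ∈ incidences L TB} => mem_seg_iff.1 (hmem q.1 q.2).2
  refine ⟨Sum.elim posS posB, hposS, hposB, fun q k h1 h2 h3 => ?_⟩
  have hB := (hmem q.1 q.2).1
  rcases k with y | q'
  · have hrep : 2 ≤ L.count y.1 := hposS y ▸ hB.two_le_count h1 h2
    have hsing := (mem_filter.1 y.2).2
    omega
  · obtain ⟨h1', h2', h3'⟩ := hposB q'
    have hpq := (hmem q'.1 q'.2).1.eq_of_mem hB h1' h2' h1 h2
    congr
    exact Subtype.ext (Prod.ext hpq (h3'.symm.trans h3))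

lemma sSing_add_card_incidences_le_rank {σ₀ : Fin n → ℝ} (hσ : isSpin σ₀) (hs : sDist L < n)
    (hTB : ∀ p, p ∈ TB ↔ TransBlock L p.1 p.2) :
    sSing L + #(incidences L TB) ≤ (moveMatrix σ₀ L).rank := by
  obtain ⟨f, hfS, hfB, hfuniq⟩ := exists_representative_flips hTB
  have hf : Function.Injective f := by
    rintro (y | q) k' h
    · rcases k' with y' | q'
      · exact congrArg _ (Subtype.ext ((hfS y).symm.trans ((congrArg L.get h).trans (hfS y'))))
      · obtain ⟨h1, h2, h3⟩ := hfB q'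
        exact hfuniq q' _ (h ▸ h1) (h ▸ h2) ((congrArg L.get h).trans h3)
    · obtain ⟨h1, h2, h3⟩ := hfB q
      exact (hfuniq q _ (h ▸ h1) (h ▸ h2) ((congrArg L.get h).symm.trans h3)).symm
  have hcard : Fintype.card ({v // v ∈ L.toFinset.filter (L.count · = 1)} ⊕
      {q // q ∈ incidences L TB}) = sSing L + #(incidences L TB) := by
    simp only [Fintype.card_sum, Fintype.card_coe, sSing]
  rw [← hcard]
  refine Matrix.card_le_rank_of_mulVec_eq_zero _ hf fun c hc0 hc k => ?_
  obtain ⟨w, hw⟩ : ∃ w, w ∉ L := by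
    by_contra! h
    refine hs.ne ?_
    rw [sDist, eq_univ_of_forall fun w => List.mem_toFinset.2 (h w), card_univ, Fintype.card_fin]
  have hfull := windowSum_zero_length_eq_zero_of_notMem hc hw (evolve_ne_zero hσ [] w)
  rcases k with y | q
  · exact apply_eq_zero_of_count_eq_one hσ hfull ((hfS y).symm ▸ (mem_filter.1 y.2).2)
  · have h0 := (transBlock_of_mem_incidences hTB q.2).1.windowSum_eq_zero hσ hc hfull q.1.2
    rw [windowSum, sum_eq_single_of_mem (f (.inr q)) (by simpa using hfB q)
      fun t ht hne => ?_] at h0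
    · exact (mul_eq_zero.1 h0).resolve_right (evolve_ne_zero hσ _ _)
    by_cases htf : t ∈ Set.range f
    · obtain ⟨k, rfl⟩ := htf
      obtain ⟨h1, h2, h3⟩ := (mem_filter.1 ht).2
      exact absurd (congrArg f (hfuniq q k h1 h2 h3)) hne
    · rw [hc0 t htf, zero_mul]

lemma sSing_add_card_incidences_eq (hTB : ∀ p, p ∈ TB ↔ TransBlock L p.1 p.2) :
    sSing L + #(incidences L TB) =
      sDist L + ∑ v ∈ L.toFinset, (#(TB.filter fun p => v ∈ seg L p.1 p.2) - 1) := by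
  rw [card_incidences_eq_sum_card, sSing, sDist]
  refine card_filter_add_sum_eq _ _ _ (fun v _ hv => ?_) fun v hv hv1 => ?_
  · rw [card_eq_zero, filter_eq_empty_iff]
    exact fun p hp hvp => absurd ((hTB p).1 hp |>.2.2.1 v hvp) (by simp [isRepV, hv])
  · obtain ⟨i, j, hB, hv⟩ := exists_transBlock_of_two_le_count (L := L) (v := v)
      (by have := List.count_pos_iff.2 (List.mem_toFinset.1 hv); omega)
    rw [Nat.one_le_iff_ne_zero, Ne, card_eq_zero, filter_eq_empty_iff]
    exact fun hempty => hempty ((hTB (i, j)).2 hB) hv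

end Rank

open Classical in
theorem stmt5_general (n : ℕ) (L : List (Fin n)) (σ₀ : Fin n → ℝ) (h : isSpin σ₀)
    (hs : sDist L < n)
    (TB : Finset (ℕ × ℕ))
    (hTB : TB = (Finset.range (L.length + 1) ×ˢ Finset.range (L.length + 1)).filter
      fun p => TransBlock L p.1 p.2)
    (b : Fin n → ℕ)
    (hb : ∀ v, b v = (TB.filter fun p => v ∈ seg L p.1 p.2).card) :
    sSing L + ∑ p ∈ TB, sDist (seg L p.1 p.2) ≤ (moveMatrix σ₀ L).rank ∧
    sSing L + ∑ p ∈ TB, sDist (seg L p.1 p.2) =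
      sDist L + ∑ v ∈ L.toFinset, (b v - 1) := by
  have hTBmem : ∀ p, p ∈ TB ↔ TransBlock L p.1 p.2 := fun p => by
    rw [hTB, mem_filter, mem_product, mem_range, mem_range]
    refine and_iff_right_of_imp fun hB => ?_
    have := hB.1
    have := hB.2.1
    omega
  rw [← card_incidences_eq_sum_sDist]
  simp_rw [hb]
  exact ⟨sSing_add_card_incidences_le_rank h hs hTBmem, sSing_add_card_incidences_eq hTBmem⟩

open Classical in
/-- Lemma 3.1(iii): if `s(L) < n` and `L` does not revisit any state, then
`rank(A_L) ≥ s₁(L) + ∑_i s(T_i) = s(L) + ∑_v (b(v) - 1)⁺`, where the `T_i` are the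
transition blocks of `L` and `b(v)` is the number of transition blocks containing `v`. -/
theorem stmt5 (n : ℕ) (L : List (Fin n)) (σ₀ : Fin n → ℝ) (h : isSpin σ₀)
    (hs : sDist L < n) (hnr : noRevisit L)
    (TB : Finset (ℕ × ℕ))
    (hTB : TB = (Finset.range (L.length + 1) ×ˢ Finset.range (L.length + 1)).filter
      fun p => TransBlock L p.1 p.2)
    (b : Fin n → ℕ)
    (hb : ∀ v, b v = (TB.filter fun p => v ∈ seg L p.1 p.2).card) :
    sSing L + ∑ p ∈ TB, sDist (seg L p.1 p.2) ≤ (moveMatrix σ₀ L).rank ∧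
    sSing L + ∑ p ∈ TB, sDist (seg L p.1 p.2) =
      sDist L + ∑ v ∈ L.toFinset, (b v - 1) :=
  stmt5_general n L σ₀ h hs TB hTB b hb
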